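/- arXiv:1201.5768 — 3 statements merged into one kernel-verified Lean document; each statement's English description precedes it below -/
import Mathlib

section
/- Suppose a kernel F : ℤ×ℤ → ℝ satisfies |F(ℓ,m)| ≤ σ(ℓ+m) where σ is nonnegative, nonincreasing and summable. Then for each n the operator (𝓕ₙ f)(m) = ∑_{ℓ=n}^∞ F(ℓ,m) f(ℓ) is a bounded operator on ℓ¹([n,∞)) with operator norm at most σ₁(2n), where σ₁(k) = ∑_{j≥k} σ(j). -/
set_option maxHeartbeats 1000000


theorem stmt_8 (σ : ℤ → ℝ) (hpos : ∀ n, 0 ≤ σ n) (hmono : Antitone σ)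
    (hsum : ∀ n : ℤ, Summable fun k : ℕ => σ (n + k))
    (σ₁ : ℤ → ℝ) (hσ₁ : ∀ n, σ₁ n = ∑' k : ℕ, σ (n + k))
    (F : ℤ → ℤ → ℝ) (n : ℤ)
    (hF : ∀ l m : ℤ, n ≤ l → n ≤ m → |F l m| ≤ σ (l + m))
    (f : ℕ → ℝ) (hf : Summable fun k => |f k|) :
    (Summable fun j : ℕ => |∑' k : ℕ, F (n + k) (n + j) * f k|) ∧
      (∑' j : ℕ, |∑' k : ℕ, F (n + k) (n + j) * f k|) ≤ σ₁ (2 * n) * ∑' k : ℕ, |f k| := by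
  set S := ∑' k : ℕ, |f k| with hSdef
  have hS0 : 0 ≤ S := tsum_nonneg fun k => abs_nonneg _
  have key : ∀ j : ℕ, |∑' k : ℕ, F (n + k) (n + j) * f k| ≤ σ (2 * n + j) * S := by
    intro j
    have hbd : ∀ k : ℕ, |F (n + k) (n + j) * f k| ≤ σ (2 * n + j) * |f k| := by
      intro k
      rw [abs_mul]
      refine mul_le_mul_of_nonneg_right ?_ (abs_nonneg _)
      calc |F (n + k) (n + j)| ≤ σ ((n + k) + (n + j)) :=
            hF _ _ (le_add_of_nonneg_right (Int.ofNat_nonneg k))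
              (le_add_of_nonneg_right (Int.ofNat_nonneg j))
        _ ≤ σ (2 * n + j) := hmono (by have := Int.ofNat_nonneg k; linarith)
    have hsummb : Summable fun k : ℕ => σ (2 * n + j) * |f k| := hf.mul_left _
    have hsumm : Summable fun k : ℕ => |F (n + k) (n + j) * f k| :=
      Summable.of_nonneg_of_le (fun k => abs_nonneg _) hbd hsummb
    calc |∑' k : ℕ, F (n + k) (n + j) * f k| ≤ ∑' k : ℕ, |F (n + k) (n + j) * f k| := by
          have h2 : Summable fun k : ℕ => ‖F (n + k) (n + j) * f k‖ := by
            simpa only [Real.norm_eq_abs] using hsumm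
          simpa only [Real.norm_eq_abs] using norm_tsum_le_tsum_norm h2
      _ ≤ ∑' k : ℕ, σ (2 * n + j) * |f k| := Summable.tsum_le_tsum hbd hsumm hsummb
      _ = σ (2 * n + j) * S := tsum_mul_left
  have hmaj : Summable fun j : ℕ => σ (2 * n + j) * S := (hsum (2 * n)).mul_right S
  have hsum1 : Summable fun j : ℕ => |∑' k : ℕ, F (n + k) (n + j) * f k| :=
    Summable.of_nonneg_of_le (fun j => abs_nonneg _) key hmaj
  refine ⟨hsum1, ?_⟩
  calc (∑' j : ℕ, |∑' k : ℕ, F (n + k) (n + j) * f k|)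
      ≤ ∑' j : ℕ, σ (2 * n + j) * S := Summable.tsum_le_tsum key hsum1 hmaj
    _ = (∑' j : ℕ, σ (2 * n + j)) * S := tsum_mul_right
    _ = σ₁ (2 * n) * S := by rw [hσ₁]
end

section
/- Let F : ℤ×ℤ → ℝ satisfy |F(ℓ,m)| ≤ σ(ℓ+m) with σ nonincreasing, nonnegative, summable, and suppose for each n the operator I + 𝓕ₙ₊₁ on ℓ¹([n+1,∞)) is invertible with inverse norm Ĉ(n). If κ(n,·) ∈ ℓ¹([n+1,∞)) solves κ(n,m) + F(n,m) + ∑_{ℓ=n+1}^∞ κ(n,ℓ) F(ℓ,m) = 0 for m > n, then ∑_{j=1}^∞ |κ(n,n+j)| ≤ Ĉ(n) σ₁(2n+1) and |κ(n,m)| ≤ σ(n+m)(1 + Ĉ(n) σ₁(2n+1)) for m > n. -/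
theorem stmt_9 (σ : ℤ → ℝ) (hpos : ∀ n, 0 ≤ σ n) (hmono : Antitone σ)
    (hsum : ∀ n : ℤ, Summable fun k : ℕ => σ (n + k))
    (σ₁ : ℤ → ℝ) (hσ₁ : ∀ n, σ₁ n = ∑' k : ℕ, σ (n + k))
    (F : ℤ → ℤ → ℝ) (hF : ∀ l m : ℤ, |F l m| ≤ σ (l + m))
    (n : ℤ) (Chat : ℝ) (hChat : 0 ≤ Chat)
    (hInv : ∀ f g : ℕ → ℝ, (Summable fun j => |f j|) → (Summable fun j => |g j|) →
      (∀ j : ℕ, f j + ∑' k : ℕ, F (n + 1 + k) (n + 1 + j) * f k = g j) →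
      (∑' j : ℕ, |f j|) ≤ Chat * ∑' j : ℕ, |g j|)
    (κ : ℤ → ℤ → ℝ) (hκsum : Summable fun j : ℕ => |κ n (n + 1 + j)|)
    (hMar : ∀ m : ℤ, n < m →
      κ n m + F n m + ∑' k : ℕ, κ n (n + 1 + k) * F (n + 1 + k) m = 0) :
    (∑' j : ℕ, |κ n (n + 1 + j)|) ≤ Chat * σ₁ (2 * n + 1) ∧
      ∀ m : ℤ, n < m → |κ n m| ≤ σ (n + m) * (1 + Chat * σ₁ (2 * n + 1)) := by
  have hgle : ∀ j : ℕ, |F n (n + 1 + j)| ≤ σ (2 * n + 1 + j) := by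
    intro j
    have := hF n (n + 1 + j)
    have harith : n + (n + 1 + (j : ℤ)) = 2 * n + 1 + j := by ring
    rwa [harith] at this
  have hgsum : Summable fun j : ℕ => |F n (n + 1 + j)| :=
    Summable.of_nonneg_of_le (fun j => abs_nonneg _) hgle (hsum (2 * n + 1))
  have habsg : ∀ j : ℕ, |(-F n (n + 1 + j))| = |F n (n + 1 + j)| := fun j => abs_neg _
  have heq : ∀ j : ℕ, κ n (n + 1 + j) +
      ∑' k : ℕ, F (n + 1 + k) (n + 1 + j) * κ n (n + 1 + k) = -F n (n + 1 + j) := by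
    intro j
    have hj : n < n + 1 + (j : ℤ) := by
      have : (0 : ℤ) ≤ j := Int.ofNat_nonneg j
      linarith
    have := hMar (n + 1 + j) hj
    have hcomm : (∑' k : ℕ, F (n + 1 + k) (n + 1 + j) * κ n (n + 1 + k)) =
        ∑' k : ℕ, κ n (n + 1 + k) * F (n + 1 + k) (n + 1 + j) := by
      congr 1; funext k; ring
    rw [hcomm]; linarith
  have key := hInv (fun j => κ n (n + 1 + j)) (fun j => -F n (n + 1 + j)) hκsum
    (by simpa [habsg] using hgsum) heq
  have hgtsum : (∑' j : ℕ, |(-F n (n + 1 + j))|) ≤ σ₁ (2 * n + 1) := by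
    rw [hσ₁]
    refine Summable.tsum_le_tsum (fun j => ?_) (by simpa [habsg] using hgsum) (hsum (2 * n + 1))
    simpa [habsg] using hgle j
  have hmain : (∑' j : ℕ, |κ n (n + 1 + j)|) ≤ Chat * σ₁ (2 * n + 1) :=
    key.trans (mul_le_mul_of_nonneg_left hgtsum hChat)
  refine ⟨hmain, fun m hm => ?_⟩
  have hprod : ∀ k : ℕ, |κ n (n + 1 + k) * F (n + 1 + k) m| ≤ |κ n (n + 1 + k)| * σ (n + m) := by
    intro k
    rw [abs_mul]
    refine mul_le_mul_of_nonneg_left ((hF _ _).trans (hmono ?_)) (abs_nonneg _)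
    have : (0 : ℤ) ≤ k := Int.ofNat_nonneg k
    linarith
  have hpsum : Summable fun k : ℕ => |κ n (n + 1 + k) * F (n + 1 + k) m| :=
    Summable.of_nonneg_of_le (fun k => abs_nonneg _) hprod (hκsum.mul_right _)
  have hts : |∑' k : ℕ, κ n (n + 1 + k) * F (n + 1 + k) m| ≤
      (∑' k : ℕ, |κ n (n + 1 + k)|) * σ (n + m) := by
    calc |∑' k : ℕ, κ n (n + 1 + k) * F (n + 1 + k) m|
        ≤ ∑' k : ℕ, |κ n (n + 1 + k) * F (n + 1 + k) m| :=
          by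
            have h1 : Summable fun k : ℕ => ‖κ n (n + 1 + k) * F (n + 1 + k) m‖ := by
              simp only [Real.norm_eq_abs]; exact hpsum
            have h2 := norm_tsum_le_tsum_norm h1
            simp only [Real.norm_eq_abs] at h2
            exact h2
      _ ≤ ∑' k : ℕ, |κ n (n + 1 + k)| * σ (n + m) :=
          Summable.tsum_le_tsum hprod hpsum (hκsum.mul_right _)
      _ = (∑' k : ℕ, |κ n (n + 1 + k)|) * σ (n + m) := tsum_mul_right
  have hEq := hMar m hm
  have : |κ n m| ≤ |F n m| + |∑' k : ℕ, κ n (n + 1 + k) * F (n + 1 + k) m| := by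
    have : κ n m = -(F n m + ∑' k : ℕ, κ n (n + 1 + k) * F (n + 1 + k) m) := by linarith
    rw [this, abs_neg]
    exact abs_add_le _ _
  calc |κ n m| ≤ |F n m| + |∑' k : ℕ, κ n (n + 1 + k) * F (n + 1 + k) m| := this
    _ ≤ σ (n + m) + (∑' k : ℕ, |κ n (n + 1 + k)|) * σ (n + m) :=
        add_le_add (hF n m) hts
    _ ≤ σ (n + m) + (Chat * σ₁ (2 * n + 1)) * σ (n + m) := by
        have := mul_le_mul_of_nonneg_right hmain (hpos (n + m))
        linarith
    _ = σ (n + m) * (1 + Chat * σ₁ (2 * n + 1)) := by ring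
end

section
/- Let h ∈ ℓ^∞(ℤ₊) be real-valued and satisfy h(s) = ∑_{ℓ=1}^∞ h(ℓ) v(ℓ+s−1) + c·δ(1,s) for s ≥ 1, where |v(ℓ)| ≤ σ(ℓ) with σ nonincreasing and nonnegative, σ(ℓ) = C ∑_{n=⌊ℓ/2⌋}^∞ p(n), ∑_{n=1}^∞ σ(n) < ∞ and ∑_{n=1}^∞ n·p(n) < ∞. Then h ∈ ℓ¹(ℤ₊). -/
open ENNReal Filter Finset

/-- Neumann iteration bounds for Marchenko's lemma. -/
noncomputable def marG (φ : ℕ → ℝ≥0∞) (κ : ℕ → ℕ → ℝ≥0∞) : ℕ → ℕ → ℝ≥0∞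
  | 0 => fun _ => 0
  | n+1 => fun j => φ j + ∑' i, marG φ κ n i * κ i j

/-- Splitting an `ℝ≥0∞` sum at an index. -/
lemma ennreal_tsum_split (f : ℕ → ℝ≥0∞) (k : ℕ) :
    ∑' i, f i = ∑ i ∈ Finset.range k, f i + ∑' i, f (i + k) :=
  ((ENNReal.summable (f := fun n => f (n + k))).hasSum.sum_range_add).tsum_eq

/-- ENNReal core of Marchenko's lemma: a bounded solution of the discrete
integral inequality with summable kernel is summable. -/
lemma marchenko_aux (S : ℕ → ℝ≥0∞) (hS : ∑' l, S l ≠ ⊤)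
    (H : ℕ → ℝ≥0∞) (M : ℝ≥0∞) (hMtop : M ≠ ⊤) (hHM : ∀ s, H s ≤ M)
    (hrec : ∀ s, 2 ≤ s → H s ≤ ∑' k, H (k + 1) * S (k + s)) :
    ∑' s, H s ≠ ⊤ := by
  obtain ⟨b, hb1, hbT⟩ : ∃ b, 1 ≤ b ∧ ∀ m, b ≤ m → ∑' k, S (k + m) ≤ 2⁻¹ := by
    have h0 : Tendsto (fun m => ∑' k, S (k + m)) atTop (nhds 0) :=
      ENNReal.tendsto_sum_nat_add S hS
    have h1 : ∀ᶠ m in atTop, (∑' k, S (k + m)) < 2⁻¹ :=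
      Tendsto.eventually_lt_const (by norm_num) h0
    rw [eventually_atTop] at h1
    obtain ⟨b₀, hb₀⟩ := h1
    exact ⟨max b₀ 1, le_max_right _ _,
      fun m hm => (hb₀ m (le_trans (le_max_left _ _) hm)).le⟩
  set φ : ℕ → ℝ≥0∞ := fun j => ∑ k ∈ Finset.range b, H (k+1) * S (k + (j + b + 1)) with hφdef
  set κ : ℕ → ℕ → ℝ≥0∞ := fun i j => S (i + (j + 2*b + 1)) with hκdef
  set W : ℕ → ℝ≥0∞ := fun j => H (j + b + 1) with hWdef
  have hκ2 : ∀ j, ∑' i, κ i j ≤ 2⁻¹ := by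
    intro j
    have he : ∑' i, κ i j = ∑' k, S (k + (j + 2*b + 1)) := by
      refine tsum_congr fun i => ?_
      rw [hκdef]
    rw [he]; exact hbT _ (by omega)
  have hκ2' : ∀ i, ∑' j, κ i j ≤ 2⁻¹ := by
    intro i
    have he : ∑' j, κ i j = ∑' k, S (k + (i + 2*b + 1)) := by
      refine tsum_congr fun j => ?_
      rw [hκdef]
      exact congrArg S (by omega)
    rw [he]; exact hbT _ (by omega)
  have hWrec : ∀ j, W j ≤ φ j + ∑' i, W i * κ i j := by
    intro j
    have h1 := hrec (j + b + 1) (by omega)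
    rw [ennreal_tsum_split (fun k => H (k+1) * S (k + (j + b + 1))) b] at h1
    refine h1.trans ?_
    rw [hWdef, hφdef]
    refine add_le_add le_rfl (le_of_eq (tsum_congr fun i => ?_))
    rw [hκdef]
    have : i + b + (j + b + 1) = i + (j + 2*b + 1) := by omega
    simp only [this]
  set Φ : ℝ≥0∞ := ∑' j, φ j with hΦdef
  have hΦfin : Φ ≠ ⊤ := by
    have h1 : Φ = ∑ k ∈ Finset.range b, ∑' j, H (k+1) * S (k + (j + b + 1)) := by
      rw [hΦdef, hφdef]
      exact Summable.tsum_finsetSum fun i _ => ENNReal.summable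
    have h2 : ∀ k, (∑' j, H (k+1) * S (k + (j + b + 1))) ≤ M * 2⁻¹ := by
      intro k
      rw [ENNReal.tsum_mul_left]
      have h3 : ∑' j, S (k + (j + b + 1)) = ∑' j, S (j + (k + b + 1)) := by
        refine tsum_congr fun j => ?_
        exact congrArg S (by omega)
      calc H (k+1) * ∑' j, S (k + (j + b + 1))
          ≤ M * ∑' j, S (j + (k + b + 1)) := by rw [h3]; exact mul_le_mul' (hHM _) le_rfl
        _ ≤ M * 2⁻¹ := mul_le_mul' le_rfl (hbT _ (by omega))
    have h4 : Φ ≤ (b : ℝ≥0∞) * (M * 2⁻¹) := by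
      rw [h1]
      calc ∑ k ∈ Finset.range b, ∑' j, H (k+1) * S (k + (j + b + 1))
          ≤ ∑ _k ∈ Finset.range b, M * 2⁻¹ := Finset.sum_le_sum fun k _ => h2 k
        _ = (b : ℝ≥0∞) * (M * 2⁻¹) := by
            rw [Finset.sum_const, card_range, nsmul_eq_mul]
    exact ne_top_of_le_ne_top
      (ENNReal.mul_ne_top (natCast_ne_top b)
        (ENNReal.mul_ne_top hMtop (by norm_num))) h4
  have claim1 : ∀ n j, W j ≤ marG φ κ n j + M * 2⁻¹ ^ n := by
    intro n
    induction n with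
    | zero =>
      intro j
      simp only [marG, pow_zero, mul_one, zero_add]
      exact hHM _
    | succ n ih =>
      intro j
      calc W j ≤ φ j + ∑' i, W i * κ i j := hWrec j
        _ ≤ φ j + ∑' i, (marG φ κ n i + M * 2⁻¹ ^ n) * κ i j := by
            gcongr with i
            exact ih i
        _ = φ j + (∑' i, marG φ κ n i * κ i j + M * 2⁻¹ ^ n * ∑' i, κ i j) := by
            rw [← ENNReal.tsum_mul_left, ← ENNReal.tsum_add]
            congr 1
            exact tsum_congr fun i => by ring
        _ ≤ φ j + (∑' i, marG φ κ n i * κ i j + M * 2⁻¹ ^ n * 2⁻¹) := by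
            gcongr
            exact hκ2 j
        _ = marG φ κ (n+1) j + M * 2⁻¹ ^ (n+1) := by
            simp only [marG, pow_succ]
            ring
  have claim2 : ∀ n, ∑' j, marG φ κ n j ≤ 2 * Φ := by
    intro n
    induction n with
    | zero => simp [marG]
    | succ n ih =>
      have h1 : ∑' j, marG φ κ (n+1) j
          = Φ + ∑' (j : ℕ) (i : ℕ), marG φ κ n i * κ i j := by
        simp only [marG]
        rw [ENNReal.tsum_add, hΦdef]
      have h2 : ∑' (j : ℕ) (i : ℕ), marG φ κ n i * κ i j
          = ∑' (i : ℕ), marG φ κ n i * ∑' (j : ℕ), κ i j := by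
        rw [ENNReal.tsum_comm]
        exact tsum_congr fun i => ENNReal.tsum_mul_left
      have h3 : ∑' (i : ℕ), marG φ κ n i * ∑' (j : ℕ), κ i j
          ≤ (∑' i, marG φ κ n i) * 2⁻¹ := by
        rw [← ENNReal.tsum_mul_right]
        exact Summable.tsum_le_tsum (fun i => mul_le_mul' le_rfl (hκ2' i))
          ENNReal.summable ENNReal.summable
      have h4 : (∑' i, marG φ κ n i) * 2⁻¹ ≤ Φ := by
        calc (∑' i, marG φ κ n i) * 2⁻¹ ≤ 2 * Φ * 2⁻¹ := by gcongr
          _ = Φ * (2 * 2⁻¹) := by ring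
          _ = Φ := by rw [ENNReal.mul_inv_cancel (by norm_num) (by norm_num), mul_one]
      calc ∑' j, marG φ κ (n+1) j
          = Φ + ∑' (j : ℕ) (i : ℕ), marG φ κ n i * κ i j := h1
        _ ≤ Φ + Φ := by rw [h2]; exact add_le_add le_rfl (h3.trans h4)
        _ = 2 * Φ := by ring
  have key : ∀ N, ∑ j ∈ Finset.range N, W j ≤ 2 * Φ := by
    intro N
    have hstep : ∀ n : ℕ, ∑ j ∈ Finset.range N, W j
        ≤ 2 * Φ + (N : ℝ≥0∞) * M * 2⁻¹ ^ n := by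
      intro n
      calc ∑ j ∈ Finset.range N, W j
          ≤ ∑ j ∈ Finset.range N, (marG φ κ n j + M * 2⁻¹ ^ n) :=
            Finset.sum_le_sum fun j _ => claim1 n j
        _ = ∑ j ∈ Finset.range N, marG φ κ n j + (N : ℝ≥0∞) * (M * 2⁻¹ ^ n) := by
            rw [Finset.sum_add_distrib, Finset.sum_const, card_range, nsmul_eq_mul]
        _ ≤ 2 * Φ + (N : ℝ≥0∞) * M * 2⁻¹ ^ n := by
            rw [mul_assoc]
            gcongr
            exact (Summable.sum_le_tsum _ (fun _ _ => zero_le) ENNReal.summable).trans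
              (claim2 n)
    have htend : Tendsto (fun n : ℕ => 2 * Φ + (N : ℝ≥0∞) * M * 2⁻¹ ^ n)
        atTop (nhds (2 * Φ + (N : ℝ≥0∞) * M * 0)) := by
      refine Tendsto.const_add _ ?_
      exact ENNReal.Tendsto.const_mul
        (ENNReal.tendsto_pow_atTop_nhds_zero_of_lt_one (by norm_num))
        (Or.inr (ENNReal.mul_ne_top (natCast_ne_top N) hMtop))
    rw [mul_zero, add_zero] at htend
    exact ge_of_tendsto htend (Eventually.of_forall hstep)
  have hWsum : ∑' j, W j ≤ 2 * Φ := ENNReal.tsum_le_of_sum_range_le key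
  have hsplit : ∑' s, H s = ∑ s ∈ Finset.range (b + 1), H s + ∑' j, H (j + (b + 1)) :=
    ennreal_tsum_split H (b + 1)
  have hWeq : ∑' j, H (j + (b + 1)) = ∑' j, W j := by
    refine tsum_congr fun j => ?_
    simp only [hWdef]
    exact congrArg H (by omega)
  rw [hsplit, hWeq]
  refine ENNReal.add_ne_top.mpr ⟨?_, ?_⟩
  · exact (ENNReal.sum_lt_top.mpr fun s _ => lt_of_le_of_lt (hHM s) hMtop.lt_top).ne
  · exact ne_top_of_le_ne_top
      (ENNReal.mul_ne_top (by norm_num) hΦfin) hWsum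

set_option maxHeartbeats 1000000 in
theorem stmt_14 (p : ℕ → ℝ) (hp : ∀ n, 0 ≤ p n)
    (hpsum : Summable fun n : ℕ => (n : ℝ) * p n)
    (C : ℝ) (hC : 0 ≤ C) (σ : ℕ → ℝ)
    (hσ : ∀ l : ℕ, σ l = C * ∑' k : ℕ, p (l / 2 + k))
    (v : ℕ → ℝ) (hv : ∀ l, |v l| ≤ σ l)
    (h : ℕ → ℝ) (hb : ∃ M : ℝ, ∀ s, |h s| ≤ M) (c : ℝ)
    (heq : ∀ s : ℕ, 1 ≤ s →
      h s - ∑' k : ℕ, h (k + 1) * v (k + s) = if s = 1 then c else 0) :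
    Summable fun s : ℕ => |h s| := by
  classical
  obtain ⟨M₀, hM₀⟩ := hb
  have hM : ∀ s, |h s| ≤ |M₀| := fun s => (hM₀ s).trans (le_abs_self _)
  have hM0 : (0:ℝ) ≤ |M₀| := abs_nonneg _
  have hσ0 : ∀ l, 0 ≤ σ l := fun l => (abs_nonneg _).trans (hv l)
  -- p is summable
  have hp1 : Summable p := by
    have h1 : Summable (fun n : ℕ => ((n:ℝ) + 1) * p (n + 1)) := by
      have := (summable_nat_add_iff 1).mpr hpsum
      exact this.congr fun n => by push_cast; ring
    have h2 : Summable (fun n : ℕ => p (n + 1)) := by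
      refine Summable.of_nonneg_of_le (fun n => hp _) (fun n => ?_) h1
      have hn : (0:ℝ) ≤ (n:ℝ) := Nat.cast_nonneg n
      nlinarith [hp (n+1)]
    exact (summable_nat_add_iff 1).mp h2
  have hptail : ∀ m : ℕ, Summable (fun k => p (m + k)) := by
    intro m
    exact ((summable_nat_add_iff m).mpr hp1).congr fun n => by rw [add_comm]
  -- ENNReal versions
  let P : ℕ → ℝ≥0∞ := fun n => ENNReal.ofReal (p n)
  let SE : ℕ → ℝ≥0∞ := fun l => ENNReal.ofReal (σ l)
  let QE : ℕ → ℝ≥0∞ := fun m => ∑' k, P (m + k)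
  have hSE : ∀ l, SE l = ENNReal.ofReal C * QE (l / 2) := by
    intro l
    show ENNReal.ofReal (σ l) = ENNReal.ofReal C * ∑' k, ENNReal.ofReal (p (l / 2 + k))
    rw [hσ l, ENNReal.ofReal_mul hC,
      ENNReal.ofReal_tsum_of_nonneg (fun k => hp _) (hptail _)]
  -- the (n+1) * p n sum is finite
  have hE : Summable (fun n : ℕ => ((n:ℝ) + 1) * p n) :=
    (hpsum.add hp1).congr fun n => by ring
  have hEtop : ∑' n : ℕ, ((n : ℝ≥0∞) + 1) * P n ≠ ⊤ := by
    have h1 : ∀ n : ℕ, ((n : ℝ≥0∞) + 1) * P n = ENNReal.ofReal (((n:ℝ) + 1) * p n) := by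
      intro n
      have hn : (0:ℝ) ≤ (n:ℝ) := Nat.cast_nonneg n
      rw [ENNReal.ofReal_mul (by linarith), ENNReal.ofReal_add hn zero_le_one,
        ENNReal.ofReal_natCast, ENNReal.ofReal_one]
    rw [tsum_congr h1, ← ENNReal.ofReal_tsum_of_nonneg
      (fun n => mul_nonneg (by positivity) (hp n)) hE]
    exact ENNReal.ofReal_ne_top
  -- tail sums written with indicators
  have hQE_eq : ∀ m, QE m = ∑' n, if m ≤ n then P n else 0 := by
    intro m
    have hinj : Function.Injective (fun k : ℕ => m + k) := fun a b hab => by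
      simp only [] at hab; omega
    have hsupp : Function.support (fun n => if m ≤ n then P n else 0)
        ⊆ Set.range (fun k : ℕ => m + k) := by
      intro n hn
      by_cases hmn : m ≤ n
      · exact ⟨n - m, by simp only []; omega⟩
      · simp only [Function.mem_support, if_neg hmn, ne_eq, not_true_eq_false] at hn
    have h2 := hinj.tsum_eq (f := fun n => if m ≤ n then P n else 0) hsupp
    rw [← h2]
    exact tsum_congr fun k => by simp
  have hQEsum : ∑' m, QE m ≤ ∑' n : ℕ, ((n : ℝ≥0∞) + 1) * P n := by
    refine ENNReal.tsum_le_of_sum_range_le fun N => ?_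
    have h1 : ∑ m ∈ Finset.range N, QE m
        = ∑ m ∈ Finset.range N, ∑' n, (if m ≤ n then P n else 0) :=
      Finset.sum_congr rfl fun m _ => hQE_eq m
    have h2 : ∑ m ∈ Finset.range N, ∑' n, (if m ≤ n then P n else 0)
        = ∑' n, ∑ m ∈ Finset.range N, (if m ≤ n then P n else 0) :=
      (Summable.tsum_finsetSum (fun m _ => ENNReal.summable)).symm
    rw [h1, h2]
    refine Summable.tsum_le_tsum (fun n => ?_) ENNReal.summable ENNReal.summable
    have h3 : ∑ m ∈ Finset.range N, (if m ≤ n then P n else 0)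
        = ∑ m ∈ (Finset.range N).filter (fun m => m ≤ n), P n :=
      (Finset.sum_filter _ _).symm
    rw [h3, Finset.sum_const, nsmul_eq_mul]
    have h4 : ((Finset.range N).filter (fun m => m ≤ n)).card ≤ n + 1 := by
      have hsub : (Finset.range N).filter (fun m => m ≤ n) ⊆ Finset.range (n+1) := by
        intro m hm
        have := (Finset.mem_filter.mp hm).2
        exact Finset.mem_range.mpr (by omega)
      simpa using Finset.card_le_card hsub
    refine mul_le_mul' ?_ le_rfl
    calc (((Finset.range N).filter (fun m => m ≤ n)).card : ℝ≥0∞)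
        ≤ ((n + 1 : ℕ) : ℝ≥0∞) := by exact_mod_cast Nat.cast_le.mpr h4
      _ = (n : ℝ≥0∞) + 1 := by push_cast; ring
  -- halving: sum over l of QE (l/2)
  have hhalf : ∑' l : ℕ, QE (l / 2) = 2 * ∑' m, QE m := by
    have h1 := tsum_even_add_odd (f := fun l : ℕ => QE (l / 2))
      ENNReal.summable ENNReal.summable
    have h2 : ∀ k : ℕ, (2 * k) / 2 = k := fun k => by omega
    have h3 : ∀ k : ℕ, (2 * k + 1) / 2 = k := fun k => by omega
    rw [← h1, tsum_congr (fun k => congrArg QE (h2 k)),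
      tsum_congr (fun k => congrArg QE (h3 k)), two_mul]
  -- total: SE summable in ℝ≥0∞
  have hSEtot : ∑' l, SE l ≠ ⊤ := by
    have h1 : ∑' l, SE l = ENNReal.ofReal C * (2 * ∑' m, QE m) := by
      rw [tsum_congr hSE, ENNReal.tsum_mul_left, hhalf]
    rw [h1]
    exact ENNReal.mul_ne_top ENNReal.ofReal_ne_top
      (ENNReal.mul_ne_top (by norm_num) (ne_top_of_le_ne_top hEtop hQEsum))
  -- real summability of σ
  have hσsum : Summable σ := by
    have h1 : Summable (fun l => (σ l).toNNReal) := by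
      refine ENNReal.tsum_coe_ne_top_iff_summable.mp ?_
      refine ne_of_eq_of_ne (tsum_congr fun l => ?_) hSEtot
      rfl
    exact (NNReal.summable_coe.mpr h1).congr fun l => Real.coe_toNNReal _ (hσ0 l)
  -- the recursive inequality in ℝ≥0∞
  have hrec : ∀ s : ℕ, 2 ≤ s →
      ENNReal.ofReal |h s| ≤ ∑' k, ENNReal.ofReal |h (k + 1)| * SE (k + s) := by
    intro s hs
    have hseq : h s = ∑' k : ℕ, h (k + 1) * v (k + s) := by
      have h0 := heq s (by omega)
      rw [if_neg (by omega)] at h0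
      linarith
    have hmaj : Summable (fun k => |M₀| * σ (k + s)) :=
      (((summable_nat_add_iff s).mpr hσsum)).mul_left _
    have habs : Summable (fun k => |h (k + 1) * v (k + s)|) := by
      refine Summable.of_nonneg_of_le (fun k => abs_nonneg _) (fun k => ?_) hmaj
      rw [abs_mul]
      exact mul_le_mul (hM _) (hv _) (abs_nonneg _) hM0
    have h1 : |h s| ≤ ∑' k, |h (k + 1) * v (k + s)| := by
      rw [hseq]
      exact norm_tsum_le_tsum_norm (f := fun k => h (k + 1) * v (k + s)) habs
    calc ENNReal.ofReal |h s| ≤ ENNReal.ofReal (∑' k, |h (k + 1) * v (k + s)|) :=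
          ENNReal.ofReal_le_ofReal h1
      _ = ∑' k, ENNReal.ofReal |h (k + 1) * v (k + s)| :=
          ENNReal.ofReal_tsum_of_nonneg (fun k => abs_nonneg _) habs
      _ ≤ ∑' k, ENNReal.ofReal |h (k + 1)| * SE (k + s) := by
          refine Summable.tsum_le_tsum (fun k => ?_) ENNReal.summable ENNReal.summable
          show ENNReal.ofReal |h (k + 1) * v (k + s)|
            ≤ ENNReal.ofReal |h (k + 1)| * ENNReal.ofReal (σ (k + s))
          rw [← ENNReal.ofReal_mul (abs_nonneg _)]
          refine ENNReal.ofReal_le_ofReal ?_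
          rw [abs_mul]
          exact mul_le_mul_of_nonneg_left (hv _) (abs_nonneg _)
  -- apply the core lemma
  have hfin : ∑' s, ENNReal.ofReal |h s| ≠ ⊤ :=
    marchenko_aux SE hSEtot (fun s => ENNReal.ofReal |h s|) (ENNReal.ofReal |M₀|)
      ENNReal.ofReal_ne_top (fun s => ENNReal.ofReal_le_ofReal (hM s)) hrec
  -- conclude real summability
  have h1 : Summable (fun s => (|h s|).toNNReal) := by
    refine ENNReal.tsum_coe_ne_top_iff_summable.mp ?_
    refine ne_of_eq_of_ne (tsum_congr fun s => ?_) hfin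
    rfl
  exact (NNReal.summable_coe.mpr h1).congr fun s => Real.coe_toNNReal _ (abs_nonneg _)
end
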